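/- arXiv:0906.0927 — 5 statements merged into one kernel-verified Lean document; each statement's English description precedes it below -/
import Mathlib

section
/- Each partial derivative J_j = ∂U/∂y_j for j = 1,...,n-1 and the function J_n = ((n-2)/2) U + Σ_b y_b ∂U/∂y_b solve the linearized problem: Δψ = 0 in the interior of R^n_+ and ∂ψ/∂y_n + n U^{2/(n-2)} ψ = 0 on {y_n = 0}. -/
/-!
Write `r(y) = ‖y + e_n‖²` and `p = -(n-2)/2`, so that `U = r^p` and `n + 2p - 2 = 0`.
From `∂_i r^q = 2q (y_i + e_i) r^{q-1}` one gets `Δ r^q = 2q(n+2q-2) r^{q-1}`, and the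
Leibniz rule `Δ((y_j + c) g) = (y_j + c) Δg + 2 ∂_j g` gives
`Δ((y_j + e_j) r^q) = 2q(n+2q) (y_j + e_j) r^{q-1}`. Hence `U`, `∂_j U = 2p (y_j + e_j) r^{p-1}`
and `J_n = p r^p - 2p (y_n + 1) r^{p-1}` are harmonic wherever `r ≠ 0`. On `{y_n = 0}` one has
`y_n + 1 = 1` and `U^{2/(n-2)} = r⁻¹`, and both boundary conditions again reduce to
`n + 2p - 2 = 0`.
-/

open MeasureTheory Metric

/-- Partial derivative in the `i`-th coordinate direction. -/
noncomputable def pd {n : ℕ} (i : Fin n) (f : EuclideanSpace ℝ (Fin n) → ℝ)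
    (y : EuclideanSpace ℝ (Fin n)) : ℝ :=
  fderiv ℝ f y (EuclideanSpace.single i 1)

/-- Euclidean Laplacian. -/
noncomputable def lap {n : ℕ} (f : EuclideanSpace ℝ (Fin n) → ℝ)
    (y : EuclideanSpace ℝ (Fin n)) : ℝ :=
  ∑ i, pd i (pd i f) y

open Filter Topology

variable {n : ℕ} {f g : EuclideanSpace ℝ (Fin n) → ℝ} {y : EuclideanSpace ℝ (Fin n)}

theorem HasFDerivAt.pd_eq {L : EuclideanSpace ℝ (Fin n) →L[ℝ] ℝ} (h : HasFDerivAt f L y)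
    (i : Fin n) : pd i f y = L (EuclideanSpace.single i 1) := by
  rw [pd, h.fderiv]

theorem Filter.EventuallyEq.pd_eq (h : f =ᶠ[𝓝 y] g) (i : Fin n) : pd i f y = pd i g y := by
  rw [pd, pd, h.fderiv_eq]

theorem Filter.EventuallyEq.pd (h : f =ᶠ[𝓝 y] g) (i : Fin n) : pd i f =ᶠ[𝓝 y] pd i g :=
  h.eventuallyEq_nhds.mono fun _ hz => hz.pd_eq i

theorem Filter.EventuallyEq.lap_eq (h : f =ᶠ[𝓝 y] g) : lap f y = lap g y :=
  Finset.sum_congr rfl fun i _ => (h.pd i).pd_eq i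

theorem pd_const_mul (c : ℝ) (f : EuclideanSpace ℝ (Fin n) → ℝ) (i : Fin n) :
    pd i (fun z => c * f z) = fun z => c * pd i f z := by
  funext z
  change fderiv ℝ (c • f) z _ = _
  rw [fderiv_const_smul_field]
  rfl

theorem lap_const_mul (c : ℝ) : lap (fun z => c * f z) y = c * lap f y := by
  simp only [lap, pd_const_mul, Finset.mul_sum]

theorem pd_add (hf : DifferentiableAt ℝ f y) (hg : DifferentiableAt ℝ g y) (i : Fin n) :
    pd i (fun z => f z + g z) y = pd i f y + pd i g y :=
  (hf.hasFDerivAt.add hg.hasFDerivAt).pd_eq i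

theorem hasFDerivAt_coord_add (j : Fin n) (c : ℝ) :
    HasFDerivAt (fun z : EuclideanSpace ℝ (Fin n) => z j + c)
      (EuclideanSpace.proj j : EuclideanSpace ℝ (Fin n) →L[ℝ] ℝ) y := by
  have h := (EuclideanSpace.proj j : EuclideanSpace ℝ (Fin n) →L[ℝ] ℝ).hasFDerivAt (x := y)
  exact h.add_const c

theorem pd_coord_mul (hg : DifferentiableAt ℝ g y) (i j : Fin n) (c : ℝ) :
    pd i (fun z => (z j + c) * g z) y = (if i = j then g y else 0) + (y j + c) * pd i g y := by
  rw [((hasFDerivAt_coord_add j c).fun_mul hg.hasFDerivAt).pd_eq i, pd, eq_comm]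
  simp [eq_comm, add_comm]

theorem ContDiffAt.differentiableAt_pd (hf : ContDiffAt ℝ 2 f y) (i : Fin n) :
    DifferentiableAt ℝ (pd i f) y :=
  ((hf.fderiv_right (m := 1) (by norm_num)).clm_apply contDiffAt_const).differentiableAt
    (by norm_num)

theorem ContDiffAt.eventually_differentiableAt (hf : ContDiffAt ℝ 2 f y) :
    ∀ᶠ z in 𝓝 y, DifferentiableAt ℝ f z :=
  (hf.eventually (by simp)).mono fun _ hz => hz.differentiableAt (by norm_num)

theorem lap_add (hf : ContDiffAt ℝ 2 f y) (hg : ContDiffAt ℝ 2 g y) :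
    lap (fun z => f z + g z) y = lap f y + lap g y := by
  have hpd (i : Fin n) : pd i (fun z => f z + g z) =ᶠ[𝓝 y] fun z => pd i f z + pd i g z := by
    filter_upwards [hf.eventually_differentiableAt, hg.eventually_differentiableAt]
      with z hfz hgz using pd_add hfz hgz i
  simp only [lap, ← Finset.sum_add_distrib]
  refine Finset.sum_congr rfl fun i _ => ?_
  rw [(hpd i).pd_eq i,
    pd_add (hf.differentiableAt_pd i) (hg.differentiableAt_pd i)]

theorem lap_coord_mul (hg : ContDiffAt ℝ 2 g y) (j : Fin n) (c : ℝ) :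
    lap (fun z => (z j + c) * g z) y = (y j + c) * lap g y + 2 * pd j g y := by
  have hpd (i : Fin n) : pd i (fun z => (z j + c) * g z) =ᶠ[𝓝 y]
      fun z => (if i = j then 1 else 0) * g z + (z j + c) * pd i g z := by
    filter_upwards [hg.eventually_differentiableAt] with z hgz
    rw [pd_coord_mul hgz]
    split_ifs <;> ring
  have hgd := hg.differentiableAt (by norm_num)
  simp only [lap, Finset.mul_sum]
  have hdelta : 2 * pd j g y = ∑ i, if i = j then 2 * pd i g y else 0 := by simp
  rw [hdelta, ← Finset.sum_add_distrib]
  refine Finset.sum_congr rfl fun i _ => ?_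
  rw [(hpd i).pd_eq i,
    pd_add (hgd.const_mul _)
      ((hasFDerivAt_coord_add j c).differentiableAt.fun_mul (hg.differentiableAt_pd i)),
    pd_const_mul, pd_coord_mul (hg.differentiableAt_pd i)]
  split_ifs <;> ring

noncomputable def normSqAdd (e y : EuclideanSpace ℝ (Fin n)) : ℝ := ∑ i, (y i + e i) ^ 2

section NormSqAdd

variable (e : EuclideanSpace ℝ (Fin n))

theorem contDiff_normSqAdd {k : WithTop ℕ∞} : ContDiff ℝ k (normSqAdd e) := by
  unfold normSqAdd
  fun_prop

theorem hasFDerivAt_normSqAdd (y : EuclideanSpace ℝ (Fin n)) :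
    HasFDerivAt (normSqAdd e) (∑ i, (2 * (y i + e i)) •
      (EuclideanSpace.proj i : EuclideanSpace ℝ (Fin n) →L[ℝ] ℝ)) y := by
  refine (HasFDerivAt.fun_sum fun i _ => (hasFDerivAt_coord_add i (e i)).pow 2).congr_fderiv ?_
  ext v
  simp [mul_add]

variable {e}

theorem pd_normSqAdd_rpow (h : normSqAdd e y ≠ 0) (q : ℝ) (i : Fin n) :
    pd i (fun z => normSqAdd e z ^ q) y = 2 * q * ((y i + e i) * normSqAdd e y ^ (q - 1)) := by
  rw [((hasFDerivAt_normSqAdd e y).rpow_const (Or.inl h)).pd_eq i]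
  simp only [smul_apply, sum_apply, PiLp.proj_apply,
    PiLp.single_apply, smul_eq_mul, mul_ite, mul_one, mul_zero, Finset.sum_ite_eq',
    Finset.mem_univ, if_true]
  ring

theorem eventually_normSqAdd_ne_zero (h : normSqAdd e y ≠ 0) :
    ∀ᶠ z in 𝓝 y, normSqAdd e z ≠ 0 :=
  (contDiff_normSqAdd e (k := 0)).continuous.continuousAt.eventually_ne h

theorem normSqAdd_nonneg (e y : EuclideanSpace ℝ (Fin n)) : 0 ≤ normSqAdd e y :=
  Finset.sum_nonneg fun _ _ => sq_nonneg _

theorem normSqAdd_pos (i : Fin n) (h : 0 < y i + e i) : 0 < normSqAdd e y :=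
  (pow_pos h 2).trans_le <| Finset.single_le_sum (f := fun i => (y i + e i) ^ 2)
    (fun _ _ => sq_nonneg _) (Finset.mem_univ i)

theorem pd_normSqAdd_rpow_eventuallyEq (h : normSqAdd e y ≠ 0) (q : ℝ) (i : Fin n) :
    pd i (fun z => normSqAdd e z ^ q) =ᶠ[𝓝 y]
      fun z => 2 * q * ((z i + e i) * normSqAdd e z ^ (q - 1)) :=
  (eventually_normSqAdd_ne_zero h).mono fun _ hz => pd_normSqAdd_rpow hz q i

theorem contDiffAt_normSqAdd_rpow (h : normSqAdd e y ≠ 0) (q : ℝ) {k : WithTop ℕ∞} :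
    ContDiffAt ℝ k (fun z => normSqAdd e z ^ q) y :=
  (contDiff_normSqAdd e).contDiffAt.rpow_const_of_ne h

theorem lap_normSqAdd_rpow (h : normSqAdd e y ≠ 0) (q : ℝ) :
    lap (fun z => normSqAdd e z ^ q) y = 2 * q * (n + 2 * q - 2) * normSqAdd e y ^ (q - 1) := by
  have hterm (i : Fin n) : pd i (pd i fun z => normSqAdd e z ^ q) y =
      2 * q * (normSqAdd e y ^ (q - 1) +
        2 * (q - 1) * (y i + e i) ^ 2 * normSqAdd e y ^ (q - 1 - 1)) := by
    rw [(pd_normSqAdd_rpow_eventuallyEq h q i).pd_eq]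
    simp only [pd_const_mul]
    rw [pd_coord_mul ((contDiffAt_normSqAdd_rpow h _ (k := 1)).differentiableAt one_ne_zero),
      if_pos rfl, pd_normSqAdd_rpow h]
    ring
  rw [lap, Finset.sum_congr rfl fun i _ => hterm i, ← Finset.mul_sum, Finset.sum_add_distrib,
    ← Finset.sum_mul, ← Finset.mul_sum, Finset.sum_const, Finset.card_univ, Fintype.card_fin,
    nsmul_eq_mul, show ∑ i, (y i + e i) ^ 2 = normSqAdd e y from rfl, Real.rpow_sub_one h (q - 1)]
  field_simp
  ring

theorem lap_coord_mul_normSqAdd_rpow (h : normSqAdd e y ≠ 0) (q : ℝ) (j : Fin n) :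
    lap (fun z => (z j + e j) * normSqAdd e z ^ q) y =
      2 * q * (n + 2 * q) * ((y j + e j) * normSqAdd e y ^ (q - 1)) := by
  rw [lap_coord_mul (contDiffAt_normSqAdd_rpow h q) j (e j), lap_normSqAdd_rpow h,
    pd_normSqAdd_rpow h]
  ring

theorem lap_pd_normSqAdd_rpow (h : normSqAdd e y ≠ 0) (q : ℝ) (j : Fin n) :
    lap (pd j fun z => normSqAdd e z ^ q) y =
      4 * q * (q - 1) * (n + 2 * q - 2) * ((y j + e j) * normSqAdd e y ^ (q - 1 - 1)) := by
  rw [(pd_normSqAdd_rpow_eventuallyEq h q j).lap_eq, lap_const_mul,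
    lap_coord_mul_normSqAdd_rpow h]
  ring

theorem sum_coord_mul_pd_normSqAdd_rpow (h : normSqAdd e y ≠ 0) (q : ℝ) :
    ∑ b, y b * pd b (fun z => normSqAdd e z ^ q) y =
      2 * q * (normSqAdd e y ^ q - (∑ b, e b * (y b + e b)) * normSqAdd e y ^ (q - 1)) := by
  have hterm (b : Fin n) : y b * pd b (fun z => normSqAdd e z ^ q) y =
      2 * q * normSqAdd e y ^ (q - 1) * ((y b + e b) ^ 2 - e b * (y b + e b)) := by
    rw [pd_normSqAdd_rpow h]
    ring
  rw [Finset.sum_congr rfl fun b _ => hterm b, ← Finset.mul_sum, Finset.sum_sub_distrib,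
    show ∑ b, (y b + e b) ^ 2 = normSqAdd e y from rfl, Real.rpow_sub_one h q]
  field_simp

end NormSqAdd

section Bubble

variable (m : Fin n)

/-- `U` with `e_m` in place of `e_n`; the theorem takes `m = n - 1`, as `Fin n` counts from `0`. -/
noncomputable def bubble : EuclideanSpace ℝ (Fin n) → ℝ :=
  fun y => normSqAdd (EuclideanSpace.single m 1) y ^ (-(((n : ℝ) - 2) / 2))

/-- `J_n = d/dλ |_{λ=1} λ^{(n-2)/2} U(λ y)`, the generator of the dilations of the bubble. -/
noncomputable def bubbleDilation (y : EuclideanSpace ℝ (Fin n)) : ℝ :=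
  ((n : ℝ) - 2) / 2 * bubble m y + ∑ b, y b * pd b (bubble m) y

variable {m}

theorem normSqAdd_single_pos (hy : 0 ≤ y m) : 0 < normSqAdd (EuclideanSpace.single m 1) y :=
  normSqAdd_pos m (by simp; linarith)

theorem normSqAdd_single_one (y : EuclideanSpace ℝ (Fin n)) :
    normSqAdd (EuclideanSpace.single m 1) y = ∑ j, if j = m then (y j + 1) ^ 2 else y j ^ 2 := by
  simp only [normSqAdd, PiLp.single_apply]
  exact Finset.sum_congr rfl fun j _ => by split_ifs <;> simp

theorem lap_pd_bubble_eq_zero (hy : 0 ≤ y m) (j : Fin n) : lap (pd j (bubble m)) y = 0 := by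
  unfold bubble
  rw [lap_pd_normSqAdd_rpow (normSqAdd_single_pos hy).ne']
  ring

theorem bubbleDilation_eventuallyEq (hy : 0 ≤ y m) :
    bubbleDilation m =ᶠ[𝓝 y] fun z => -(((n : ℝ) - 2) / 2) * bubble m z + (n - 2) *
      ((z m + 1) * normSqAdd (EuclideanSpace.single m 1) z ^ (-(((n : ℝ) - 2) / 2) - 1)) := by
  filter_upwards [eventually_normSqAdd_ne_zero (normSqAdd_single_pos hy).ne'] with z hz
  unfold bubbleDilation bubble
  rw [sum_coord_mul_pd_normSqAdd_rpow hz]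
  simp only [PiLp.single_apply, ite_mul, one_mul, zero_mul, Finset.sum_ite_eq', Finset.mem_univ,
    if_true]
  ring

theorem lap_bubble_eq_zero (hy : 0 ≤ y m) : lap (bubble m) y = 0 := by
  unfold bubble
  rw [lap_normSqAdd_rpow (normSqAdd_single_pos hy).ne']
  ring

theorem lap_bubbleDilation_eq_zero (hy : 0 ≤ y m) : lap (bubbleDilation m) y = 0 := by
  have hr := (normSqAdd_single_pos hy).ne'
  have hU : ContDiffAt ℝ 2 (bubble m) y := contDiffAt_normSqAdd_rpow hr _
  have hV := contDiffAt_normSqAdd_rpow hr (-(((n : ℝ) - 2) / 2) - 1) (k := 2)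
  rw [(bubbleDilation_eventuallyEq hy).lap_eq,
    lap_add (contDiffAt_const.mul hU) (contDiffAt_const.mul
      ((by fun_prop : ContDiffAt ℝ 2 (fun z : EuclideanSpace ℝ (Fin n) => z m + 1) y).mul hV)),
    lap_const_mul, lap_const_mul, lap_bubble_eq_zero hy, lap_coord_mul hV, lap_normSqAdd_rpow hr,
    pd_normSqAdd_rpow hr]
  simp only [PiLp.single_apply, if_true]
  ring

theorem bubble_rpow_two_div (hn : (n : ℝ) ≠ 2) :
    bubble m y ^ (2 / ((n : ℝ) - 2)) = (normSqAdd (EuclideanSpace.single m 1) y)⁻¹ := by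
  have hn' : (n : ℝ) - 2 ≠ 0 := sub_ne_zero.mpr hn
  unfold bubble
  rw [← Real.rpow_mul (normSqAdd_nonneg _ _),
    show -(((n : ℝ) - 2) / 2) * (2 / ((n : ℝ) - 2)) = -1 by field_simp, Real.rpow_neg_one]

theorem pd_pd_bubble_add_mul_eq_zero (hn : (n : ℝ) ≠ 2) (hy : y m = 0) {j : Fin n}
    (hj : j ≠ m) :
    pd m (pd j (bubble m)) y + n * bubble m y ^ (2 / ((n : ℝ) - 2)) * pd j (bubble m) y = 0 := by
  have hr := (normSqAdd_single_pos hy.ge).ne'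
  rw [bubble_rpow_two_div hn]
  unfold bubble
  rw [(pd_normSqAdd_rpow_eventuallyEq hr _ j).pd_eq]
  simp only [pd_const_mul]
  rw [pd_coord_mul ((contDiffAt_normSqAdd_rpow hr _ (k := 1)).differentiableAt one_ne_zero),
    if_neg hj.symm, pd_normSqAdd_rpow hr, pd_normSqAdd_rpow hr, Real.rpow_sub_one hr (_ - 1)]
  simp only [PiLp.single_apply, if_neg hj, if_true, hy]
  field_simp
  ring

theorem pd_bubbleDilation_add_mul_eq_zero (hn : (n : ℝ) ≠ 2) (hy : y m = 0) :
    pd m (bubbleDilation m) y + n * bubble m y ^ (2 / ((n : ℝ) - 2)) * bubbleDilation m y =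
      0 := by
  have hr := (normSqAdd_single_pos hy.ge).ne'
  have hU : DifferentiableAt ℝ (bubble m) y :=
    (contDiffAt_normSqAdd_rpow hr _ (k := 1)).differentiableAt one_ne_zero
  have hV := (contDiffAt_normSqAdd_rpow hr (-(((n : ℝ) - 2) / 2) - 1) (k := 1)).differentiableAt
    one_ne_zero
  have hJ := bubbleDilation_eventuallyEq hy.ge
  rw [hJ.pd_eq, hJ.eq_of_nhds, bubble_rpow_two_div hn,
    pd_add (hU.const_mul _)
      (((hasFDerivAt_coord_add m 1).differentiableAt.fun_mul hV).const_mul _)]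
  simp only [pd_const_mul]
  rw [pd_coord_mul hV, if_pos rfl]
  unfold bubble
  rw [pd_normSqAdd_rpow hr, pd_normSqAdd_rpow hr, Real.rpow_sub_one hr (_ - 1),
    Real.rpow_sub_one hr (-(((n : ℝ) - 2) / 2))]
  simp only [PiLp.single_apply, if_true, hy]
  field_simp
  ring

end Bubble

/-- The functions `J_j = ∂U/∂y_j` (for `j = 1,…,n-1`) and
`J_n = ((n-2)/2) U + Σ_b y_b ∂U/∂y_b` solve the linearized problem
`Δψ = 0` in the interior of `ℝⁿ₊` and `∂ψ/∂y_n + n U^{2/(n-2)} ψ = 0` on `{y_n = 0}`. -/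
theorem statement2 (n : ℕ) (hn : 3 ≤ n)
    (U : EuclideanSpace ℝ (Fin n) → ℝ)
    (hU : ∀ y, U y =
      (∑ j : Fin n, if (j : ℕ) = n - 1 then (y j + 1) ^ 2 else (y j) ^ 2)
        ^ (-(((n : ℝ) - 2) / 2))) :
    (∀ j : Fin n, (j : ℕ) ≠ n - 1 →
      (∀ y : EuclideanSpace ℝ (Fin n), 0 < y ⟨n - 1, by omega⟩ → lap (pd j U) y = 0) ∧
      (∀ y : EuclideanSpace ℝ (Fin n), y ⟨n - 1, by omega⟩ = 0 →
        pd ⟨n - 1, by omega⟩ (pd j U) y +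
          (n : ℝ) * U y ^ ((2 : ℝ) / ((n : ℝ) - 2)) * pd j U y = 0)) ∧
    ((∀ y : EuclideanSpace ℝ (Fin n), 0 < y ⟨n - 1, by omega⟩ →
        lap (fun x => ((n : ℝ) - 2) / 2 * U x + ∑ b, x b * pd b U x) y = 0) ∧
      (∀ y : EuclideanSpace ℝ (Fin n), y ⟨n - 1, by omega⟩ = 0 →
        pd ⟨n - 1, by omega⟩ (fun x => ((n : ℝ) - 2) / 2 * U x + ∑ b, x b * pd b U x) y +
          (n : ℝ) * U y ^ ((2 : ℝ) / ((n : ℝ) - 2)) *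
            (((n : ℝ) - 2) / 2 * U y + ∑ b, y b * pd b U y) = 0)) := by
  set m : Fin n := ⟨n - 1, by omega⟩
  have hn2 : (n : ℝ) ≠ 2 := by
    have : (3 : ℝ) ≤ n := by exact_mod_cast hn
    linarith
  have hm (j : Fin n) (hj : (j : ℕ) ≠ n - 1) : j ≠ m := fun h => hj (congrArg Fin.val h)
  obtain rfl : U = bubble m := funext fun y => by
    rw [hU, bubble, normSqAdd_single_one]
    simp only [Fin.ext_iff]
    rfl
  exact ⟨fun j hj => ⟨fun y hy => lap_pd_bubble_eq_zero hy.le j,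
      fun y hy => pd_pd_bubble_add_mul_eq_zero hn2 hy (hm j hj)⟩,
    fun y hy => lap_bubbleDilation_eq_zero hy.le,
    fun y hy => pd_bubbleDilation_add_mul_eq_zero hn2 hy⟩
end

section
/- The integral ∫_0^∞ (1 - r^2)(1 + r^2)^{-n} log(1 + r^2) r^{n-2} dr is strictly negative for n ≥ 3; consequently ∫_{∂R^n_+} J_n (log U) U^{n/(n-2)} dȳ > 0. -/
open MeasureTheory Metric

open Set Real

/-!
The inversion `r ↦ r⁻¹` preserves `(0, ∞)` and sends the integrand `F(r)` to
`r⁻² F(r⁻¹) = -F(r) - K(r)` with `K(r) = 2 (r² - 1) log r (1 + r²)^{-n} r^{n-2}`,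
so `2 ∫ F = -∫ K`. Since `r² - 1` and `log r` have the same sign, `K ≥ 0` on `(0, ∞)` and `K > 0`
on `(1, ∞)`, whence `∫ F < 0`. The boundary integrand is radial, and in polar coordinates its
integral is a positive multiple of `-((n - 2)² / 4) ∫ F`.
-/

section InversionSubstitution

variable {E : Type*} [NormedAddCommGroup E] [NormedSpace ℝ E]

theorem integral_comp_inv_Ioi (g : ℝ → E) :
    ∫ x in Ioi 0, (x ^ 2)⁻¹ • g x⁻¹ = ∫ x in Ioi 0, g x := by
  rw [← integral_comp_rpow_Ioi g (p := -1) (by norm_num)]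
  refine setIntegral_congr_fun measurableSet_Ioi fun x hx => ?_
  norm_num [rpow_neg_one, rpow_neg hx.le]

theorem integrableOn_comp_inv_Ioi_iff (g : ℝ → E) :
    IntegrableOn (fun x => (x ^ 2)⁻¹ • g x⁻¹) (Ioi 0) ↔ IntegrableOn g (Ioi 0) := by
  rw [← integrableOn_Ioi_comp_rpow_iff g (p := -1) (by norm_num)]
  refine integrableOn_congr_fun (fun x hx => ?_) measurableSet_Ioi
  norm_num [rpow_neg_one, rpow_neg (le_of_lt hx)]

end InversionSubstitution

noncomputable def radialIntegrand (n : ℕ) (r : ℝ) : ℝ :=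
  (1 - r ^ 2) * (1 + r ^ 2) ^ (-(n : ℝ)) * log (1 + r ^ 2) * r ^ (n - 2)

noncomputable def inversionDefect (n : ℕ) (x : ℝ) : ℝ :=
  2 * ((x ^ 2 - 1) * log x) * (1 + x ^ 2) ^ (-(n : ℝ)) * x ^ (n - 2)

theorem continuous_radialIntegrand (n : ℕ) : Continuous (radialIntegrand n) := by
  have hpos (r : ℝ) : 1 + r ^ 2 ≠ 0 := by positivity
  unfold radialIntegrand
  exact (((continuous_const.sub (continuous_pow 2)).mul
    ((continuous_const.add (continuous_pow 2)).rpow_const fun r => .inl (hpos r))).mul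
    ((continuous_const.add (continuous_pow 2)).log hpos)).mul (continuous_pow _)

theorem abs_radialIntegrand_le {n : ℕ} (hn : 2 ≤ n) (r : ℝ) :
    |radialIntegrand n r| ≤ 4 * (1 + r ^ 2) ^ (-3 / 4 : ℝ) := by
  set s := 1 + r ^ 2
  have hs1 : 1 ≤ s := by nlinarith [sq_nonneg r]
  have hs0 : 0 < s := by linarith
  have h_one_sub : |1 - r ^ 2| ≤ s :=
    abs_le.2 ⟨by nlinarith [sq_nonneg r], by nlinarith [sq_nonneg r]⟩
  have h_log : |log s| ≤ 4 * s ^ (1 / 4 : ℝ) := by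
    rw [abs_of_nonneg (log_nonneg hs1)]
    linarith [log_le_rpow_div hs0.le (by norm_num : (0 : ℝ) < 1 / 4)]
  have h_pow : |r| ^ (n - 2) ≤ s ^ (n - 2) :=
    pow_le_pow_left₀ (abs_nonneg r) (by nlinarith [sq_abs r, abs_nonneg r]) _
  have h_exp : s * s ^ (-(n : ℝ)) * s ^ (n - 2) = s⁻¹ := by
    obtain ⟨m, rfl⟩ : ∃ m, n = m + 2 := ⟨n - 2, by omega⟩
    rw [rpow_neg hs0.le, rpow_natCast, Nat.add_sub_cancel]
    field_simp
    ring
  calc |radialIntegrand n r|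
      = |1 - r ^ 2| * s ^ (-(n : ℝ)) * |log s| * |r| ^ (n - 2) := by
        rw [radialIntegrand, abs_mul, abs_mul, abs_mul, abs_of_pos (rpow_pos_of_pos hs0 _),
          abs_pow]
    _ ≤ s * s ^ (-(n : ℝ)) * (4 * s ^ (1 / 4 : ℝ)) * s ^ (n - 2) := by gcongr
    _ = 4 * (s ^ (-1 : ℝ) * s ^ (1 / 4 : ℝ)) := by
        rw [rpow_neg_one, ← h_exp]; ring
    _ = 4 * s ^ (-3 / 4 : ℝ) := by rw [← rpow_add hs0]; norm_num

theorem integrable_radialIntegrand {n : ℕ} (hn : 2 ≤ n) : Integrable (radialIntegrand n) := by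
  have h_dom : Integrable fun r : ℝ => 4 * (1 + r ^ 2) ^ (-3 / 4 : ℝ) := by
    have := integrable_rpow_neg_one_add_norm_sq (E := ℝ) (μ := volume) (r := 3 / 2) (by norm_num)
    convert this.const_mul 4 using 3
    norm_num
  refine h_dom.mono' (continuous_radialIntegrand n).aestronglyMeasurable
    (.of_forall fun r => ?_)
  rw [Real.norm_eq_abs]
  exact abs_radialIntegrand_le hn r

theorem radialIntegrand_inv {n : ℕ} (hn : 2 ≤ n) {x : ℝ} (hx : 0 < x) :
    (x ^ 2)⁻¹ * radialIntegrand n x⁻¹ = -radialIntegrand n x - inversionDefect n x := by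
  obtain ⟨m, rfl⟩ : ∃ m, n = m + 2 := ⟨n - 2, by omega⟩
  have hx2 : 0 < x ^ 2 := by positivity
  have hs : 0 < 1 + x ^ 2 := by positivity
  have h_base : 1 + x⁻¹ ^ 2 = (1 + x ^ 2) * (x ^ 2)⁻¹ := by field_simp; ring
  have h_rpow : (1 + x⁻¹ ^ 2) ^ (-((m + 2 : ℕ) : ℝ)) =
      (1 + x ^ 2) ^ (-((m + 2 : ℕ) : ℝ)) * (x ^ 2) ^ (m + 2) := by
    rw [h_base, mul_rpow hs.le (inv_nonneg.2 hx2.le), inv_rpow hx2.le, ← rpow_neg hx2.le,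
      neg_neg, rpow_natCast]
  have h_log : log (1 + x⁻¹ ^ 2) = log (1 + x ^ 2) - 2 * log x := by
    rw [h_base, log_mul hs.ne' (inv_ne_zero hx2.ne'), log_inv, log_pow]
    push_cast; ring
  rw [radialIntegrand, radialIntegrand, inversionDefect, h_rpow, h_log, Nat.add_sub_cancel]
  simp only [inv_pow]
  field_simp
  ring

theorem sq_sub_one_mul_log_nonneg {x : ℝ} (hx : 0 < x) : 0 ≤ (x ^ 2 - 1) * log x := by
  rcases le_total x 1 with h | h
  · exact mul_nonneg_of_nonpos_of_nonpos (by nlinarith) (log_nonpos hx.le h)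
  · exact mul_nonneg (by nlinarith) (log_nonneg h)

theorem integrableOn_inversionDefect {n : ℕ} (hn : 2 ≤ n) :
    IntegrableOn (inversionDefect n) (Ioi 0) := by
  have hF : IntegrableOn (radialIntegrand n) (Ioi 0) := (integrable_radialIntegrand hn).integrableOn
  have hF_inv := (integrableOn_comp_inv_Ioi_iff (radialIntegrand n)).2 hF
  refine (hF.neg.sub hF_inv).congr_fun (fun x hx => ?_) measurableSet_Ioi
  simp only [Pi.sub_apply, Pi.neg_apply, smul_eq_mul, radialIntegrand_inv hn hx]
  ring

theorem integral_inversionDefect_pos {n : ℕ} (hn : 2 ≤ n) :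
    0 < ∫ x in Ioi 0, inversionDefect n x := by
  have h_pos {x : ℝ} (hx : 1 < x) : 0 < inversionDefect n x := by
    have : 0 < x ^ 2 - 1 := by nlinarith
    have := log_pos hx
    unfold inversionDefect
    positivity
  have h_nonneg : 0 ≤ᵐ[volume.restrict (Ioi 0)] inversionDefect n := by
    filter_upwards [ae_restrict_mem measurableSet_Ioi] with x (hx : 0 < x)
    have := sq_sub_one_mul_log_nonneg hx
    unfold inversionDefect
    positivity
  rw [setIntegral_pos_iff_support_of_nonneg_ae h_nonneg (integrableOn_inversionDefect hn)]
  calc (0 : ENNReal) < volume (Ioi (1 : ℝ)) := by simp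
    _ ≤ volume (Function.support (inversionDefect n) ∩ Ioi 0) :=
      measure_mono fun x (hx : 1 < x) => ⟨(h_pos hx).ne', zero_lt_one.trans hx⟩

theorem two_mul_integral_radialIntegrand {n : ℕ} (hn : 2 ≤ n) :
    2 * ∫ r in Ioi 0, radialIntegrand n r = -∫ x in Ioi 0, inversionDefect n x := by
  have hF : IntegrableOn (radialIntegrand n) (Ioi 0) := (integrable_radialIntegrand hn).integrableOn
  have hF_inv := (integrableOn_comp_inv_Ioi_iff (radialIntegrand n)).2 hF
  calc 2 * ∫ r in Ioi 0, radialIntegrand n r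
      = (∫ x in Ioi 0, radialIntegrand n x) +
          ∫ x in Ioi 0, (x ^ 2)⁻¹ • radialIntegrand n x⁻¹ := by
        rw [integral_comp_inv_Ioi]; ring
    _ = ∫ x in Ioi 0, (radialIntegrand n x + (x ^ 2)⁻¹ • radialIntegrand n x⁻¹) :=
        (integral_add hF hF_inv).symm
    _ = ∫ x in Ioi 0, -inversionDefect n x := by
        refine setIntegral_congr_fun measurableSet_Ioi fun x hx => ?_
        simp only [smul_eq_mul, radialIntegrand_inv hn hx]
        ring
    _ = -∫ x in Ioi 0, inversionDefect n x := integral_neg _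

theorem integral_radialIntegrand_neg {n : ℕ} (hn : 2 ≤ n) :
    ∫ r in Ioi 0, radialIntegrand n r < 0 := by
  linarith [two_mul_integral_radialIntegrand hn, integral_inversionDefect_pos hn]

noncomputable def boundaryIntegrand (n : ℕ) (r : ℝ) : ℝ :=
  (((n : ℝ) - 2) / 2 * (1 - r ^ 2) * (1 + r ^ 2) ^ (-((n : ℝ) / 2))) *
    log ((1 + r ^ 2) ^ (-(((n : ℝ) - 2) / 2))) * ((1 + r ^ 2) ^ (-((n : ℝ) / 2)))

theorem pow_mul_boundaryIntegrand (n : ℕ) (r : ℝ) :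
    r ^ (n - 2) * boundaryIntegrand n r = -(((n : ℝ) - 2) ^ 2 / 4) * radialIntegrand n r := by
  have hs : 0 < 1 + r ^ 2 := by positivity
  have h_sq : (1 + r ^ 2) ^ (-(n : ℝ)) =
      (1 + r ^ 2) ^ (-((n : ℝ) / 2)) * (1 + r ^ 2) ^ (-((n : ℝ) / 2)) := by
    rw [← rpow_add hs]; ring_nf
  rw [boundaryIntegrand, radialIntegrand, log_rpow hs, h_sq]
  ring

theorem integral_boundaryIntegrand_pos {n : ℕ} (hn : 3 ≤ n) :
    0 < ∫ y : EuclideanSpace ℝ (Fin (n - 1)), boundaryIntegrand n ‖y‖ := by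
  have : Nontrivial (EuclideanSpace ℝ (Fin (n - 1))) :=
    Module.nontrivial_of_finrank_pos (R := ℝ) (by rw [finrank_euclideanSpace_fin]; omega)
  have h_radial : ∫ r in Ioi 0, r ^ (n - 2) • boundaryIntegrand n r =
      -(((n : ℝ) - 2) ^ 2 / 4) * ∫ r in Ioi 0, radialIntegrand n r := by
    rw [← integral_const_mul]
    exact setIntegral_congr_fun measurableSet_Ioi fun r _ => pow_mul_boundaryIntegrand n r
  rw [integral_fun_norm_addHaar volume (boundaryIntegrand n), finrank_euclideanSpace_fin,
    show n - 1 - 1 = n - 2 by omega, h_radial, nsmul_eq_mul, smul_eq_mul]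
  have h_coeff : 0 < ((n : ℝ) - 2) ^ 2 / 4 := by
    have : (3 : ℝ) ≤ n := by exact_mod_cast hn
    have : 0 < (n : ℝ) - 2 := by linarith
    positivity
  have h_ball : 0 < volume.real (ball (0 : EuclideanSpace ℝ (Fin (n - 1))) 1) :=
    ENNReal.toReal_pos (measure_ball_pos _ _ one_pos).ne' measure_ball_lt_top.ne
  have h_dim : (0 : ℝ) < (n - 1 : ℕ) := by exact_mod_cast (by omega : 0 < n - 1)
  exact mul_pos h_dim (mul_pos h_ball
    (mul_pos_of_neg_of_neg (neg_neg_of_pos h_coeff) (integral_radialIntegrand_neg (by omega))))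

/-- The integral `∫_0^∞ (1-r²)(1+r²)^{-n} log(1+r²) r^{n-2} dr` is strictly negative for
`n ≥ 3`; consequently `∫_{∂ℝⁿ₊} J_n (log U) U^{n/(n-2)} dȳ > 0`, where on the boundary
`J_n = ((n-2)/2)(1-|ȳ|²)(1+|ȳ|²)^{-n/2}`, `U = (1+|ȳ|²)^{-(n-2)/2}` and
`U^{n/(n-2)} = (1+|ȳ|²)^{-n/2}`. -/
theorem statement5 (n : ℕ) (hn : 3 ≤ n) :
    (∫ r in Set.Ioi (0 : ℝ),
        (1 - r ^ 2) * (1 + r ^ 2) ^ (-(n : ℝ)) * Real.log (1 + r ^ 2) * r ^ (n - 2)) < 0 ∧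
    0 < ∫ y : EuclideanSpace ℝ (Fin (n - 1)),
        (((n : ℝ) - 2) / 2 * (1 - ‖y‖ ^ 2) * (1 + ‖y‖ ^ 2) ^ (-((n : ℝ) / 2))) *
          Real.log ((1 + ‖y‖ ^ 2) ^ (-(((n : ℝ) - 2) / 2))) *
          ((1 + ‖y‖ ^ 2) ^ (-((n : ℝ) / 2))) :=
  ⟨integral_radialIntegrand_neg (by omega), integral_boundaryIntegrand_pos hn⟩
end

section
/- Let I = ∫_0^∞ s^n (1+s^2)^{-n} ds. Then for every t ≥ 0: ∫_0^∞ (s^2 + t^2 - 1)(s^2 + (t+1)^2)^{-(n+1)} s^n ds = I · [ ((n+1)/(2n)) (t+1)^{1-n} + ((n-1)/(2n)) (t^2-1)(t+1)^{-1-n} ]. -/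
/-!
After the substitution `s = (t + 1) x` the integrand becomes
`(t + 1)^{-n-2} ((t + 1)² x^{n+2} + (t² - 1) xⁿ) (1 + x²)^{-(n+1)}`.
Both resulting integrals are multiples of `I`: differentiating `s^{k+1} (1 + s²)^{-m}` and
integrating over `(0, ∞)` (the boundary terms vanish) gives
`∫ s^{k+2} (1 + s²)^{-(m+1)} = (k+1)/(2m) ∫ s^k (1 + s²)^{-m}`, and writing
`1 = (1 + s²) - s²` gives the companion formula for `∫ s^k (1 + s²)^{-(m+1)}`.
-/

open MeasureTheory Set Filter Real Topology

lemma pow_mul_one_add_sq_rpow_neg_le {s m : ℝ} (hs : 0 < s) (hm : 0 ≤ m) (k : ℕ) :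
    s ^ k * (1 + s ^ 2) ^ (-m) ≤ s ^ ((k : ℝ) - 2 * m) :=
  calc s ^ k * (1 + s ^ 2) ^ (-m) ≤ s ^ k * (s ^ 2) ^ (-m) := by
        gcongr ?_ * ?_
        exact rpow_le_rpow_of_nonpos (by positivity) (by linarith) (by linarith)
    _ = s ^ ((k : ℝ) - 2 * m) := by
        rw [← rpow_natCast, ← rpow_natCast s 2, ← rpow_mul hs.le, ← rpow_add hs]
        ring_nf

lemma integrableOn_pow_mul_one_add_sq_rpow_neg (k : ℕ) {m : ℝ} (h : (k : ℝ) - 2 * m < -1) :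
    IntegrableOn (fun s : ℝ => s ^ k * (1 + s ^ 2) ^ (-m)) (Ioi 0) := by
  have hcont : Continuous (fun s : ℝ => s ^ k * (1 + s ^ 2) ^ (-m)) :=
    (continuous_pow k).mul <| (by fun_prop : Continuous fun s : ℝ => 1 + s ^ 2).rpow_const
      fun s => Or.inl (by positivity)
  have hm : 0 ≤ m := by linarith [(Nat.cast_nonneg k : (0 : ℝ) ≤ k)]
  have htail : IntegrableOn (fun s : ℝ => s ^ k * (1 + s ^ 2) ^ (-m)) (Ioi 1) := by
    refine (integrableOn_Ioi_rpow_of_lt h one_pos).mono' hcont.aestronglyMeasurable.restrict ?_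
    filter_upwards [ae_restrict_mem measurableSet_Ioi] with s (hs : 1 < s)
    rw [norm_of_nonneg (by positivity)]
    exact pow_mul_one_add_sq_rpow_neg_le (by linarith) hm k
  rw [← Ioc_union_Ioi_eq_Ioi zero_le_one]
  exact hcont.integrableOn_Ioc.union htail

lemma tendsto_pow_mul_one_add_sq_rpow_neg_atTop (k : ℕ) {m : ℝ} (h : (k : ℝ) < 2 * m) :
    Tendsto (fun s : ℝ => s ^ k * (1 + s ^ 2) ^ (-m)) atTop (𝓝 0) := by
  have hm : 0 ≤ m := by linarith [(Nat.cast_nonneg k : (0 : ℝ) ≤ k)]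
  have hbound : Tendsto (fun s : ℝ => s ^ ((k : ℝ) - 2 * m)) atTop (𝓝 0) := by
    simpa only [neg_sub] using tendsto_rpow_neg_atTop (y := 2 * m - k) (by linarith)
  refine squeeze_zero' ?_ ?_ hbound
  · filter_upwards [eventually_ge_atTop 0] with s hs
    positivity
  · filter_upwards [eventually_gt_atTop 0] with s hs
    exact pow_mul_one_add_sq_rpow_neg_le hs hm k

lemma hasDerivAt_pow_succ_mul_one_add_sq_rpow_neg (k : ℕ) (m s : ℝ) :
    HasDerivAt (fun s : ℝ => s ^ (k + 1) * (1 + s ^ 2) ^ (-m))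
      ((k + 1) * (s ^ k * (1 + s ^ 2) ^ (-m))
        - 2 * m * (s ^ (k + 2) * (1 + s ^ 2) ^ (-(m + 1)))) s := by
  have hbase : HasDerivAt (fun s : ℝ => 1 + s ^ 2) (2 * s) s := by
    simpa using (hasDerivAt_pow 2 s).const_add 1
  have hpow := hbase.rpow_const (p := -m) (Or.inl (by positivity))
  refine ((hasDerivAt_pow (k + 1) s).mul hpow).congr_deriv ?_
  rw [show -m - 1 = -(m + 1) by ring, rpow_neg (by positivity), rpow_neg (by positivity),
    rpow_add_one (by positivity)]
  push_cast
  ring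

theorem integral_pow_add_two_mul_one_add_sq_rpow_neg (k : ℕ) {m : ℝ} (h : (k : ℝ) + 1 < 2 * m) :
    ∫ s in Ioi (0 : ℝ), s ^ (k + 2) * (1 + s ^ 2) ^ (-(m + 1)) =
      (k + 1) / (2 * m) * ∫ s in Ioi (0 : ℝ), s ^ k * (1 + s ^ 2) ^ (-m) := by
  have hm : 0 < m := by linarith [(Nat.cast_nonneg k : (0 : ℝ) ≤ k)]
  have hint : IntegrableOn (fun s : ℝ => s ^ k * (1 + s ^ 2) ^ (-m)) (Ioi 0) :=
    integrableOn_pow_mul_one_add_sq_rpow_neg k (by linarith)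
  have hint₂ : IntegrableOn (fun s : ℝ => s ^ (k + 2) * (1 + s ^ 2) ^ (-(m + 1))) (Ioi 0) :=
    integrableOn_pow_mul_one_add_sq_rpow_neg (k + 2) (by push_cast; linarith)
  have hftc := integral_Ioi_of_hasDerivAt_of_tendsto' (a := 0)
    (fun s _ => hasDerivAt_pow_succ_mul_one_add_sq_rpow_neg k m s)
    ((hint.const_mul _).sub (hint₂.const_mul _))
    (tendsto_pow_mul_one_add_sq_rpow_neg_atTop (k + 1) (by push_cast; linarith))
  rw [integral_sub (hint.const_mul _) (hint₂.const_mul _), integral_const_mul,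
    integral_const_mul] at hftc
  simp only [zero_pow k.succ_ne_zero, zero_mul, sub_zero] at hftc
  field_simp
  linarith

theorem integral_pow_mul_one_add_sq_rpow_neg_add_one (k : ℕ) {m : ℝ} (h : (k : ℝ) + 1 < 2 * m) :
    ∫ s in Ioi (0 : ℝ), s ^ k * (1 + s ^ 2) ^ (-(m + 1)) =
      (2 * m - k - 1) / (2 * m) * ∫ s in Ioi (0 : ℝ), s ^ k * (1 + s ^ 2) ^ (-m) := by
  have hm : 0 < m := by linarith [(Nat.cast_nonneg k : (0 : ℝ) ≤ k)]
  have hsplit : ∀ s : ℝ, s ^ k * (1 + s ^ 2) ^ (-(m + 1)) =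
      s ^ k * (1 + s ^ 2) ^ (-m) - s ^ (k + 2) * (1 + s ^ 2) ^ (-(m + 1)) := fun s => by
    rw [show -m = -(m + 1) + 1 by ring, rpow_add_one (by positivity)]
    ring
  simp_rw [hsplit]
  rw [integral_sub (integrableOn_pow_mul_one_add_sq_rpow_neg k (by linarith))
    (integrableOn_pow_mul_one_add_sq_rpow_neg (k + 2) (by push_cast; linarith)),
    integral_pow_add_two_mul_one_add_sq_rpow_neg k h]
  field_simp
  ring

lemma sq_add_mul_sq_add_sq_rpow_neg_mul_pow {c : ℝ} (hc : 0 < c) (a m x : ℝ) (k : ℕ) :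
    ((c * x) ^ 2 + a) * ((c * x) ^ 2 + c ^ 2) ^ (-(m + 1)) * (c * x) ^ k =
      c ^ ((k : ℝ) - 2 * m - 2) * (c ^ 2 * (x ^ (k + 2) * (1 + x ^ 2) ^ (-(m + 1)))
        + a * (x ^ k * (1 + x ^ 2) ^ (-(m + 1)))) := by
  have hscale : (c ^ 2) ^ (-(m + 1)) * c ^ k = c ^ ((k : ℝ) - 2 * m - 2) := by
    rw [← rpow_natCast c 2, ← rpow_natCast c k, ← rpow_mul hc.le, ← rpow_add hc]
    ring_nf
  rw [show (c * x) ^ 2 + c ^ 2 = c ^ 2 * (1 + x ^ 2) by ring,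
    mul_rpow (by positivity) (by positivity), ← hscale]
  ring

theorem integral_sq_add_mul_sq_add_sq_rpow_neg_mul_pow (k : ℕ) {m c : ℝ}
    (h : (k : ℝ) + 1 < 2 * m) (hc : 0 < c) (a : ℝ) :
    ∫ s in Ioi (0 : ℝ), (s ^ 2 + a) * (s ^ 2 + c ^ 2) ^ (-(m + 1)) * s ^ k =
      c ^ ((k : ℝ) - 2 * m - 1) * ((k + 1) / (2 * m) * c ^ 2 + (2 * m - k - 1) / (2 * m) * a) *
        ∫ s in Ioi (0 : ℝ), s ^ k * (1 + s ^ 2) ^ (-m) := by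
  have hsubst := integral_comp_mul_left_Ioi
    (fun s => (s ^ 2 + a) * (s ^ 2 + c ^ 2) ^ (-(m + 1)) * s ^ k) 0 hc
  rw [mul_zero, smul_eq_mul, eq_inv_mul_iff_mul_eq₀ hc.ne'] at hsubst
  simp only [sq_add_mul_sq_add_sq_rpow_neg_mul_pow hc] at hsubst
  rw [← hsubst, integral_const_mul, integral_add
      ((integrableOn_pow_mul_one_add_sq_rpow_neg (k + 2) (by push_cast; linarith)).const_mul _)
      ((integrableOn_pow_mul_one_add_sq_rpow_neg k (by linarith)).const_mul _),
    integral_const_mul, integral_const_mul, integral_pow_add_two_mul_one_add_sq_rpow_neg k h,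
    integral_pow_mul_one_add_sq_rpow_neg_add_one k h,
    show (k : ℝ) - 2 * m - 1 = 1 + ((k : ℝ) - 2 * m - 2) by ring, rpow_add hc, rpow_one]
  ring

/-- With `I = ∫_0^∞ sⁿ (1+s²)^{-n} ds`, for every `t ≥ 0`:
`∫_0^∞ (s² + t² - 1)(s² + (t+1)²)^{-(n+1)} sⁿ ds
  = I [ ((n+1)/(2n)) (t+1)^{1-n} + ((n-1)/(2n)) (t²-1)(t+1)^{-1-n} ]`. -/
theorem statement12 (n : ℕ) (hn : 3 ≤ n) (t : ℝ) (ht : 0 ≤ t) :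
    (∫ s in Set.Ioi (0 : ℝ),
        (s ^ 2 + t ^ 2 - 1) * (s ^ 2 + (t + 1) ^ 2) ^ (-((n : ℝ) + 1)) * s ^ n) =
      (∫ s in Set.Ioi (0 : ℝ), s ^ n * (1 + s ^ 2) ^ (-(n : ℝ))) *
        (((n : ℝ) + 1) / (2 * n) * (t + 1) ^ (1 - (n : ℝ)) +
          ((n : ℝ) - 1) / (2 * n) * (t ^ 2 - 1) * (t + 1) ^ (-1 - (n : ℝ))) := by
  have hn' : (n : ℝ) + 1 < 2 * n := by
    have : (3 : ℝ) ≤ n := by exact_mod_cast hn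
    linarith
  have hc : 0 < t + 1 := by linarith
  simp_rw [add_sub_assoc (_ ^ 2)]
  rw [integral_sq_add_mul_sq_add_sq_rpow_neg_mul_pow n hn' hc,
    show (n : ℝ) - 2 * n - 1 = -1 - n by ring, show (1 : ℝ) - n = -1 - n + 2 by ring,
    rpow_add hc, show (2 : ℝ) * n - n - 1 = n - 1 by ring]
  norm_cast
  ring
end

section
/- Let I = ∫_0^∞ s^n (1+s^2)^{-n} ds. Then for every t ≥ 0: ∫_0^∞ (s^2 + t^2 - 1)(s^2 + (t+1)^2)^{-n} s^{n-2} ds = I · [ (t+1)^{1-n} + (t^2-1)(t+1)^{-1-n} ]. -/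
/-!
Substituting `s = (t+1) x` turns the left side into a combination of
`∫ xⁿ (1+x²)⁻ⁿ` and `∫ xⁿ⁻² (1+x²)⁻ⁿ`, and the inversion `x ↦ 1/x` shows these two
integrals are equal.
-/

open MeasureTheory Set Real

theorem integrableOn_Ioi_pow_mul_one_add_sq_rpow_neg (k : ℕ) {r : ℝ} (hk : (k : ℝ) + 1 < 2 * r) :
    IntegrableOn (fun u : ℝ => u ^ k * (1 + u ^ 2) ^ (-r)) (Ioi 0) := by
  have hcont : Continuous fun u : ℝ => u ^ k * (1 + u ^ 2) ^ (-r) :=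
    (continuous_pow k).mul <| Continuous.rpow_const (by fun_prop) fun u => Or.inl (by positivity)
  have hdom : IntegrableOn (fun u : ℝ => u ^ ((k : ℝ) - 2 * r)) (Ioi 1) :=
    integrableOn_Ioi_rpow_of_lt (by linarith) one_pos
  have htail : IntegrableOn (fun u : ℝ => u ^ k * (1 + u ^ 2) ^ (-r)) (Ioi 1) := by
    refine hdom.mono' hcont.aestronglyMeasurable.restrict ?_
    filter_upwards [ae_restrict_mem measurableSet_Ioi] with u (hu : 1 < u)
    have hu0 : 0 < u := one_pos.trans hu
    rw [norm_of_nonneg (by positivity)]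
    calc u ^ k * (1 + u ^ 2) ^ (-r) ≤ u ^ k * (u ^ 2) ^ (-r) := by
          refine mul_le_mul_of_nonneg_left ?_ (by positivity)
          exact rpow_le_rpow_of_nonpos (by positivity) (by linarith) (by linarith)
      _ = u ^ ((k : ℝ) - 2 * r) := by
          rw [← rpow_natCast, ← rpow_natCast u 2, ← rpow_mul hu0.le, ← rpow_add hu0]
          ring_nf
  rw [← Ioc_union_Ioi_eq_Ioi zero_le_one]
  exact hcont.integrableOn_Ioc.union htail

theorem integral_Ioi_pow_mul_one_add_sq_rpow_neg_symm {k m n : ℕ} (h : k + m + 2 = 2 * n) :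
    ∫ u in Ioi (0 : ℝ), u ^ k * (1 + u ^ 2) ^ (-(n : ℝ)) =
      ∫ u in Ioi (0 : ℝ), u ^ m * (1 + u ^ 2) ^ (-(n : ℝ)) := by
  rw [← integral_comp_rpow_Ioi (fun u : ℝ => u ^ m * (1 + u ^ 2) ^ (-(n : ℝ))) (p := -1)
    (by norm_num)]
  refine setIntegral_congr_fun measurableSet_Ioi fun x (hx : 0 < x) => ?_
  have hpow : x ^ (2 * n) = x ^ k * x ^ m * x ^ 2 := by rw [← h, pow_add, pow_add]
  have hbase : 1 + x⁻¹ ^ 2 = (1 + x ^ 2) / x ^ 2 := by field_simp; ring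
  simp only [smul_eq_mul, abs_neg, abs_one, one_mul, rpow_one, hbase,
    show (-1 : ℝ) - 1 = -(2 : ℕ) by norm_num, rpow_neg hx.le, rpow_natCast,
    rpow_neg (by positivity : (0 : ℝ) ≤ 1 + x ^ 2),
    rpow_neg (by positivity : (0 : ℝ) ≤ (1 + x ^ 2) / x ^ 2)]
  rw [div_pow, ← pow_mul, hpow, inv_pow]
  field_simp

theorem integral_Ioi_sq_add_mul_sq_add_sq_rpow_neg {n : ℕ} (hn : 2 ≤ n) (a : ℝ) {c : ℝ}
    (hc : 0 < c) :
    ∫ s in Ioi (0 : ℝ), (s ^ 2 + a) * (s ^ 2 + c ^ 2) ^ (-(n : ℝ)) * s ^ (n - 2) =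
      (∫ s in Ioi (0 : ℝ), s ^ n * (1 + s ^ 2) ^ (-(n : ℝ))) *
        (c ^ (1 - (n : ℝ)) + a * c ^ (-1 - (n : ℝ))) := by
  obtain ⟨m, rfl⟩ : ∃ m, n = m + 2 := ⟨n - 2, by omega⟩
  set f : ℕ → ℝ → ℝ := fun k u => u ^ k * (1 + u ^ 2) ^ (-((m + 2 : ℕ) : ℝ)) with hf
  have hint : ∀ k ≤ m + 2, IntegrableOn (f k) (Ioi 0) := fun k hk =>
    integrableOn_Ioi_pow_mul_one_add_sq_rpow_neg k (by push_cast; norm_cast; omega)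
  have hscale : ∀ x : ℝ, ((c * x) ^ 2 + a) * ((c * x) ^ 2 + c ^ 2) ^ (-((m + 2 : ℕ) : ℝ)) *
      (c * x) ^ (m + 2 - 2) = c ^ m / c ^ (2 * (m + 2)) * (c ^ 2 * f (m + 2) x + a * f m x) := by
    intro x
    simp only [hf, rpow_neg (by positivity : (0 : ℝ) ≤ (c * x) ^ 2 + c ^ 2),
      rpow_neg (by positivity : (0 : ℝ) ≤ 1 + x ^ 2), rpow_natCast, Nat.add_sub_cancel]
    rw [show (c * x) ^ 2 + c ^ 2 = c ^ 2 * (1 + x ^ 2) by ring, mul_pow (c ^ 2), ← pow_mul]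
    field_simp
    ring
  calc ∫ s in Ioi (0 : ℝ), (s ^ 2 + a) * (s ^ 2 + c ^ 2) ^ (-((m + 2 : ℕ) : ℝ)) * s ^ (m + 2 - 2)
      = c * ∫ x in Ioi (0 : ℝ), c ^ m / c ^ (2 * (m + 2)) * (c ^ 2 * f (m + 2) x + a * f m x) := by
        have hsub := integral_comp_mul_left_Ioi
          (fun s : ℝ => (s ^ 2 + a) * (s ^ 2 + c ^ 2) ^ (-((m + 2 : ℕ) : ℝ)) * s ^ (m + 2 - 2)) 0 hc
        simp only [mul_zero, smul_eq_mul] at hsub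
        simp_rw [← hscale, hsub, mul_inv_cancel_left₀ hc.ne']
    _ = c * (c ^ m / c ^ (2 * (m + 2))) *
          (c ^ 2 * (∫ x in Ioi (0 : ℝ), f (m + 2) x) + a * ∫ x in Ioi (0 : ℝ), f m x) := by
        rw [integral_const_mul, integral_add ((hint _ le_rfl).const_mul _)
          ((hint m (by omega)).const_mul _), integral_const_mul, integral_const_mul, mul_assoc]
    _ = _ := by
        rw [hf, integral_Ioi_pow_mul_one_add_sq_rpow_neg_symm (k := m) (m := m + 2) (by ring)]
        simp only [rpow_sub hc, rpow_one, rpow_neg_one, rpow_natCast]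
        field_simp
        ring

/-- With `I = ∫_0^∞ sⁿ (1+s²)^{-n} ds`, for every `t ≥ 0`:
`∫_0^∞ (s² + t² - 1)(s² + (t+1)²)^{-n} s^{n-2} ds
  = I [ (t+1)^{1-n} + (t²-1)(t+1)^{-1-n} ]`. -/
theorem statement13 (n : ℕ) (hn : 3 ≤ n) (t : ℝ) (ht : 0 ≤ t) :
    (∫ s in Set.Ioi (0 : ℝ),
        (s ^ 2 + t ^ 2 - 1) * (s ^ 2 + (t + 1) ^ 2) ^ (-(n : ℝ)) * s ^ (n - 2)) =
      (∫ s in Set.Ioi (0 : ℝ), s ^ n * (1 + s ^ 2) ^ (-(n : ℝ))) *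
        ((t + 1) ^ (1 - (n : ℝ)) + (t ^ 2 - 1) * (t + 1) ^ (-1 - (n : ℝ))) := by
  simp_rw [add_sub_assoc]
  exact integral_Ioi_sq_add_mul_sq_add_sq_rpow_neg (by omega) _ (by linarith)
end

section
/- Let I = ∫_0^∞ s^n (1+s^2)^{-n} ds. Then for every t ≥ 0 and integer n ≥ 4: ∫_0^∞ (s^2 + t^2 - 1)(s^2 + (t+1)^2)^{-(n-1)} s^{n-2} ds = I · [ 2(n-1)/(n-3) · (t+1)^{3-n} + 2 (t^2-1)(t+1)^{1-n} ]. -/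
open Set Real MeasureTheory Filter Topology

/-
Integrating by parts against `d/ds (1 + s²)^{-m} = -2ms (1 + s²)^{-m-1}` and using
`s² = (1 + s²) - 1` gives the recurrences relating the moments
`J k m = ∫_0^∞ s^k (1 + s²)^{-m} ds`, which express `J (n-2) (n-1)` and `J n (n-1)` as multiples
of `I = J n n`. The substitution `s = (t+1) x` turns the left-hand side into
`(t+1)^{3-n} J n (n-1) + (t²-1) (t+1)^{1-n} J (n-2) (n-1)`.
-/

noncomputable def momentIntegral (k : ℕ) (m : ℝ) : ℝ :=
  ∫ s in Ioi 0, s ^ k * (1 + s ^ 2) ^ (-m)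

lemma continuous_pow_mul_add_sq_rpow_neg (k : ℕ) {a : ℝ} (ha : 0 < a) (m : ℝ) :
    Continuous fun s : ℝ => s ^ k * (a + s ^ 2) ^ (-m) :=
  (continuous_pow k).mul <| (continuous_const.add (continuous_pow 2)).rpow_const
    fun s => Or.inl (add_pos_of_pos_of_nonneg ha (sq_nonneg s)).ne'

lemma pow_mul_add_sq_rpow_neg_le (k : ℕ) {a m x : ℝ} (ha : 0 ≤ a) (hm : 0 ≤ m) (hx : 0 < x) :
    x ^ k * (a + x ^ 2) ^ (-m) ≤ x ^ ((k : ℝ) - 2 * m) := by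
  calc x ^ k * (a + x ^ 2) ^ (-m) ≤ x ^ k * (x ^ 2) ^ (-m) :=
        mul_le_mul_of_nonneg_left
          (rpow_le_rpow_of_nonpos (by positivity) (by linarith) (by linarith)) (by positivity)
    _ = x ^ ((k : ℝ) - 2 * m) := by
        rw [← rpow_natCast x k, ← rpow_natCast x 2, ← rpow_mul hx.le, ← rpow_add hx]
        ring_nf

lemma integrableOn_pow_mul_add_sq_rpow_neg (k : ℕ) {a m : ℝ} (ha : 0 < a)
    (h : (k : ℝ) + 1 < 2 * m) :
    IntegrableOn (fun s : ℝ => s ^ k * (a + s ^ 2) ^ (-m)) (Ioi 0) := by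
  have hcont := continuous_pow_mul_add_sq_rpow_neg k ha m
  have hm : 0 ≤ m := by linarith [(Nat.cast_nonneg k : (0 : ℝ) ≤ k)]
  have htail : IntegrableOn (fun s : ℝ => s ^ k * (a + s ^ 2) ^ (-m)) (Ioi 1) := by
    refine (integrableOn_Ioi_rpow_of_lt (a := (k : ℝ) - 2 * m) (by linarith) one_pos).mono'
      hcont.aestronglyMeasurable.restrict ?_
    filter_upwards [ae_restrict_mem measurableSet_Ioi] with x hx
    have hx0 : (0 : ℝ) < x := one_pos.trans hx
    rw [Real.norm_eq_abs, abs_of_nonneg (by positivity)]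
    exact pow_mul_add_sq_rpow_neg_le k ha.le hm hx0
  rw [← Ioc_union_Ioi_eq_Ioi zero_le_one]
  exact hcont.integrableOn_Ioc.union htail

lemma tendsto_pow_succ_mul_one_add_sq_rpow_neg (k : ℕ) {m : ℝ} (h : (k : ℝ) + 1 < 2 * m) :
    Tendsto (fun s : ℝ => s ^ (k + 1) * (1 + s ^ 2) ^ (-m)) atTop (𝓝 0) := by
  have hm : 0 ≤ m := by linarith [(Nat.cast_nonneg k : (0 : ℝ) ≤ k)]
  refine squeeze_zero' ?_ ?_ (tendsto_rpow_neg_atTop (y := 2 * m - (k + 1)) (by linarith))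
  · filter_upwards [eventually_ge_atTop 0] with x hx
    positivity
  · filter_upwards [eventually_gt_atTop 0] with x hx
    convert pow_mul_add_sq_rpow_neg_le (k + 1) zero_le_one hm hx using 2
    push_cast
    ring1

lemma two_mul_mul_momentIntegral_add_two_add_one (k : ℕ) {m : ℝ} (h : (k : ℝ) + 1 < 2 * m) :
    2 * m * momentIntegral (k + 2) (m + 1) = (k + 1) * momentIntegral k m := by
  have hint := integrableOn_pow_mul_add_sq_rpow_neg k one_pos h
  have hint₂ := integrableOn_pow_mul_add_sq_rpow_neg (k + 2) (m := m + 1) one_pos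
    (by push_cast; linarith)
  have hderiv : ∀ x ∈ Ici (0 : ℝ), HasDerivAt (fun s : ℝ => s ^ (k + 1) * (1 + s ^ 2) ^ (-m))
      ((k + 1) * (x ^ k * (1 + x ^ 2) ^ (-m))
        - 2 * m * (x ^ (k + 2) * (1 + x ^ 2) ^ (-(m + 1)))) x := by
    intro x _
    have hpow : HasDerivAt (fun s : ℝ => s ^ (k + 1)) ((k + 1) * x ^ k) x := by
      simpa using hasDerivAt_pow (k + 1) x
    have hrpow : HasDerivAt (fun s : ℝ => (1 + s ^ 2) ^ (-m))
        (2 * x * (-m) * (1 + x ^ 2) ^ (-m - 1)) x := by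
      have hsq : HasDerivAt (fun s : ℝ => 1 + s ^ 2) (2 * x) x := by
        simpa using (hasDerivAt_pow 2 x).const_add 1
      exact hsq.rpow_const (Or.inl (by positivity))
    refine (hpow.mul hrpow).congr_deriv ?_
    rw [show -(m + 1) = -m - 1 by ring]
    ring
  have hibp := integral_Ioi_of_hasDerivAt_of_tendsto' hderiv
    ((hint.const_mul _).sub (hint₂.const_mul _)) (tendsto_pow_succ_mul_one_add_sq_rpow_neg k h)
  rw [integral_sub (hint.const_mul _) (hint₂.const_mul _), integral_const_mul,
    integral_const_mul] at hibp
  have hzero : (0 : ℝ) ^ (k + 1) * (1 + 0 ^ 2) ^ (-m) = 0 := by simp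
  rw [hzero, sub_zero] at hibp
  simp only [momentIntegral]
  linarith

lemma momentIntegral_add_two_add_one (k : ℕ) {m : ℝ} (h : (k : ℝ) + 1 < 2 * m) :
    momentIntegral (k + 2) (m + 1) = momentIntegral k m - momentIntegral k (m + 1) := by
  rw [momentIntegral, momentIntegral, momentIntegral, ← integral_sub
    (integrableOn_pow_mul_add_sq_rpow_neg k one_pos h)
    (integrableOn_pow_mul_add_sq_rpow_neg k one_pos (by linarith))]
  refine setIntegral_congr_fun measurableSet_Ioi fun x _ => ?_
  have hpos : (0 : ℝ) < 1 + x ^ 2 := by positivity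
  rw [show -m = 1 + -(m + 1) by ring, rpow_add hpos, rpow_one]
  ring

lemma momentIntegral_sub_two_sub_one {n : ℕ} (hn : 2 ≤ n) :
    momentIntegral (n - 2) ((n : ℝ) - 1) = 2 * momentIntegral n n := by
  obtain ⟨k, rfl⟩ := Nat.exists_eq_add_of_le' hn
  have hk : (0 : ℝ) < k + 1 := by positivity
  have hibp := two_mul_mul_momentIntegral_add_two_add_one k (m := (k : ℝ) + 1) (by linarith)
  rw [show (k : ℝ) + 1 + 1 = k + 2 by ring] at hibp
  push_cast
  rw [show (k : ℝ) + 2 - 1 = k + 1 by ring]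
  exact mul_left_cancel₀ hk.ne' (by linear_combination -hibp)

lemma momentIntegral_sub_one {n : ℕ} (hn : 4 ≤ n) :
    momentIntegral n ((n : ℝ) - 1) = 2 * ((n : ℝ) - 1) / ((n : ℝ) - 3) * momentIntegral n n := by
  obtain ⟨k, rfl⟩ := Nat.exists_eq_add_of_le' (le_trans (by norm_num : 2 ≤ 4) hn)
  have hk : (2 : ℝ) ≤ k := by exact_mod_cast (by omega : 2 ≤ k)
  have hibp := two_mul_mul_momentIntegral_add_two_add_one k (m := (k : ℝ)) (by linarith)
  have hsplit := momentIntegral_add_two_add_one k (m := (k : ℝ)) (by linarith)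
  have hlast := momentIntegral_sub_two_sub_one (n := k + 2) (by omega)
  push_cast at hlast ⊢
  rw [show (k : ℝ) + 2 - 1 = k + 1 by ring] at hlast
  rw [show (k : ℝ) + 2 - 1 = k + 1 by ring, div_mul_eq_mul_div, eq_div_iff (by linarith)]
  linear_combination hibp - (k + 1) * hsplit + (k + 1) * hlast

lemma integral_pow_mul_sq_add_sq_rpow_neg (k : ℕ) (m : ℝ) {c : ℝ} (hc : 0 < c) :
    ∫ s in Ioi 0, s ^ k * (c ^ 2 + s ^ 2) ^ (-m) = c ^ ((k : ℝ) + 1 - 2 * m) * momentIntegral k m := by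
  have hsubst := integral_comp_mul_left_Ioi (fun s => s ^ k * (c ^ 2 + s ^ 2) ^ (-m)) 0 hc
  rw [mul_zero, smul_eq_mul] at hsubst
  have hscale (x : ℝ) : (c * x) ^ k * (c ^ 2 + (c * x) ^ 2) ^ (-m)
      = c ^ ((k : ℝ) - 2 * m) * (x ^ k * (1 + x ^ 2) ^ (-m)) := by
    rw [show c ^ 2 + (c * x) ^ 2 = c ^ 2 * (1 + x ^ 2) by ring,
      mul_rpow (by positivity) (by positivity), mul_pow, ← rpow_natCast c 2, ← rpow_mul hc.le,
      ← rpow_natCast c k, sub_eq_add_neg, rpow_add hc]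
    push_cast
    ring_nf
  simp only [hscale, integral_const_mul] at hsubst
  rw [← mul_inv_cancel_left₀ hc.ne' (∫ s in Ioi 0, _), ← hsubst, momentIntegral,
    show (k : ℝ) + 1 - 2 * m = 1 + (k - 2 * m) by ring, rpow_add hc, rpow_one, mul_assoc]

/-- With `I = ∫_0^∞ sⁿ (1+s²)^{-n} ds`, for every `t ≥ 0` and integer `n ≥ 4`:
`∫_0^∞ (s² + t² - 1)(s² + (t+1)²)^{-(n-1)} s^{n-2} ds
  = I [ 2(n-1)/(n-3) (t+1)^{3-n} + 2(t²-1)(t+1)^{1-n} ]`. -/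
theorem statement14 (n : ℕ) (hn : 4 ≤ n) (t : ℝ) (ht : 0 ≤ t) :
    (∫ s in Set.Ioi (0 : ℝ),
        (s ^ 2 + t ^ 2 - 1) * (s ^ 2 + (t + 1) ^ 2) ^ (-((n : ℝ) - 1)) * s ^ (n - 2)) =
      (∫ s in Set.Ioi (0 : ℝ), s ^ n * (1 + s ^ 2) ^ (-(n : ℝ))) *
        (2 * ((n : ℝ) - 1) / ((n : ℝ) - 3) * (t + 1) ^ (3 - (n : ℝ)) +
          2 * (t ^ 2 - 1) * (t + 1) ^ (1 - (n : ℝ))) := by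
  have hc : 0 < t + 1 := by linarith
  have hn' : (4 : ℝ) ≤ n := by exact_mod_cast hn
  have hsplit : ∀ s : ℝ,
      (s ^ 2 + t ^ 2 - 1) * (s ^ 2 + (t + 1) ^ 2) ^ (-((n : ℝ) - 1)) * s ^ (n - 2)
        = s ^ n * ((t + 1) ^ 2 + s ^ 2) ^ (-((n : ℝ) - 1))
          + (t ^ 2 - 1) * (s ^ (n - 2) * ((t + 1) ^ 2 + s ^ 2) ^ (-((n : ℝ) - 1))) := by
    intro s
    rw [show s ^ n = s ^ 2 * s ^ (n - 2) by rw [← pow_add]; congr 1; omega,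
      add_comm (s ^ 2) ((t + 1) ^ 2)]
    ring
  have hcast : ((n - 2 : ℕ) : ℝ) = n - 2 := by push_cast [show 2 ≤ n by omega]; ring
  simp only [hsplit]
  rw [integral_add, integral_const_mul, integral_pow_mul_sq_add_sq_rpow_neg _ _ hc,
    integral_pow_mul_sq_add_sq_rpow_neg _ _ hc, momentIntegral_sub_one hn,
    momentIntegral_sub_two_sub_one (by omega), hcast]
  · rw [show (n : ℝ) + 1 - 2 * (n - 1) = 3 - n by ring,
      show (n : ℝ) - 2 + 1 - 2 * (n - 1) = 1 - n by ring, momentIntegral]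
    ring
  · exact integrableOn_pow_mul_add_sq_rpow_neg n (by positivity) (by linarith)
  · refine (integrableOn_pow_mul_add_sq_rpow_neg (n - 2) (by positivity) ?_).const_mul _
    rw [hcast]
    linarith
end
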